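/- arXiv:2303.01199 — 2 statements merged into one kernel-verified Lean document; each statement's English description precedes it below -/
import Mathlib

section
/- Let X be a metric space and S ⊆ C(ℝ,X) a shift-invariant set satisfying the compactness axiom. Then for every x ∈ X, the limit sets ω_S(x) = π(ω(S_x)) and α_S(x) = π(α(S_x)) are closed subsets of X and are weakly invariant with respect to S. -/
open Set Filter Topology

namespace AxODE

variable {X : Type*} [MetricSpace X]

/-- The shift map `σ(t, φ)(s) = φ(s + t)` on `C(ℝ, X)`. -/
def shift (t : ℝ) (φ : C(ℝ, X)) : C(ℝ, X) :=
  ⟨fun s => φ (s + t), φ.continuous.comp (continuous_add_right t)⟩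

/-- `S` is shift-invariant if `σ(t, φ) ∈ S` for all `t ∈ ℝ` and `φ ∈ S`. -/
def ShiftInvariant (S : Set C(ℝ, X)) : Prop :=
  ∀ (t : ℝ), ∀ φ ∈ S, shift t φ ∈ S

/-- The evaluation map `e_S : ℝ × S → ℝ × X`, `e_S(t, φ) = (t, φ(t))`. -/
def evalMap (S : Set C(ℝ, X)) : ℝ × S → ℝ × X :=
  fun p => (p.1, (p.2 : C(ℝ, X)) p.1)

/-- `S` satisfies the compactness axiom if `e_S` is proper, i.e. the preimage under `e_S`
of every compact subset of `ℝ × X` is compact. -/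
def CompactnessAxiom (S : Set C(ℝ, X)) : Prop :=
  ∀ K : Set (ℝ × X), IsCompact K → IsCompact (evalMap S ⁻¹' K)

/-- `A` is weakly invariant with respect to `S`. -/
def WeaklyInvariant (S : Set C(ℝ, X)) (A : Set X) : Prop :=
  ∀ x ∈ A, ∃ φ ∈ S, φ 0 = x ∧ Set.range ⇑φ ⊆ A

/-- `ω(B) = ⋂_{t>0} closure (⋃_{s ≥ t} σ(s, B))`, taken in `C(ℝ, X)`. -/
def omegaSet (B : Set C(ℝ, X)) : Set C(ℝ, X) :=
  ⋂ t ∈ Set.Ioi (0 : ℝ), closure (⋃ s ∈ Set.Ici t, shift s '' B)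

/-- `α(B) = ⋂_{t<0} closure (⋃_{s ≤ t} σ(s, B))`, taken in `C(ℝ, X)`. -/
def alphaSet (B : Set C(ℝ, X)) : Set C(ℝ, X) :=
  ⋂ t ∈ Set.Iio (0 : ℝ), closure (⋃ s ∈ Set.Iic t, shift s '' B)

/-- `ω_S(x) = π(ω(S_x))` where `S_x = {φ ∈ S : φ(0) = x}`. -/
def omegaS (S : Set C(ℝ, X)) (x : X) : Set X :=
  (fun φ : C(ℝ, X) => φ 0) '' omegaSet {φ ∈ S | φ 0 = x}

/-- `α_S(x) = π(α(S_x))` where `S_x = {φ ∈ S : φ(0) = x}`. -/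
def alphaS (S : Set C(ℝ, X)) (x : X) : Set X :=
  (fun φ : C(ℝ, X) => φ 0) '' alphaSet {φ ∈ S | φ 0 = x}

/-!
The compactness axiom makes evaluation at `0`, restricted to `S`, a proper map. Hence `S` is
closed in `C(ℝ, X)`, and `π` maps closed subsets of `S` to closed subsets of `X`. The sets
`ω(S_x)` and `α(S_x)` are the ω-limits of `S_x` under the shift flow along `atTop` and `atBot`:
they are closed, shift-invariant, and contained in `closure S = S`. So their images under `π` are
closed, and weakly invariant because `φ t = σ(t, φ) 0`.
-/

lemma shift_apply (t : ℝ) (φ : C(ℝ, X)) (s : ℝ) : shift t φ s = φ (s + t) := rfl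

def shiftFlow : Flow ℝ C(ℝ, X) where
  toFun := shift
  cont' := ContinuousMap.continuous_of_continuous_uncurry _ <|
    continuous_eval.comp <| (continuous_snd.comp continuous_fst).prodMk <|
      continuous_snd.add (continuous_fst.comp continuous_fst)
  map_add' t₁ t₂ φ := by ext s; simp only [shift_apply, add_comm t₁ t₂, add_assoc]
  map_zero' φ := by ext s; simp only [shift_apply, add_zero]

lemma omegaSet_eq_omegaLimit (B : Set C(ℝ, X)) :
    omegaSet B = omegaLimit atTop shiftFlow B := by
  have hbasis : (atTop : Filter ℝ).HasBasis (0 < ·) Ici :=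
    (atTop_basis' 1).to_hasBasis (fun t ht => ⟨t, one_pos.trans_le ht, subset_rfl⟩)
      fun t _ => ⟨max t 1, le_max_right t 1, Ici_subset_Ici.mpr (le_max_left t 1)⟩
  rw [omegaLimit, hbasis.biInter_mem fun _ _ h => closure_mono (image2_subset_right h)]
  simp only [omegaSet, iUnion_image_left]
  rfl

lemma alphaSet_eq_omegaLimit (B : Set C(ℝ, X)) :
    alphaSet B = omegaLimit atBot shiftFlow B := by
  have hbasis : (atBot : Filter ℝ).HasBasis (· < 0) Iic :=
    (atBot_basis' (-1)).to_hasBasis (fun t ht => ⟨t, ht.trans_lt neg_one_lt_zero, subset_rfl⟩)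
      fun t _ => ⟨min t (-1), min_le_right t (-1), Iic_subset_Iic.mpr (min_le_left t (-1))⟩
  rw [omegaLimit, hbasis.biInter_mem fun _ _ h => closure_mono (image2_subset_right h)]
  simp only [alphaSet, iUnion_image_left]
  rfl

lemma weaklyInvariant_image_eval_zero {S W : Set C(ℝ, X)} (hWS : W ⊆ S)
    (hW : IsInvariant shiftFlow W) : WeaklyInvariant S ((fun φ : C(ℝ, X) => φ 0) '' W) := by
  rintro _ ⟨φ, hφ, rfl⟩
  refine ⟨φ, hWS hφ, rfl, ?_⟩
  rintro _ ⟨t, rfl⟩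
  exact ⟨shift t φ, hW t hφ, by simp only [shift_apply, zero_add]⟩

namespace CompactnessAxiom

variable {S : Set C(ℝ, X)}

lemma isProperMap_evalMap (hcpt : CompactnessAxiom S) : IsProperMap (evalMap S) :=
  isProperMap_iff_isCompact_preimage.mpr ⟨continuous_fst.prodMk <| continuous_eval.comp <|
    (continuous_subtype_val.comp continuous_snd).prodMk continuous_fst, fun K hK => hcpt K hK⟩

lemma isProperMap_eval_zero (hcpt : CompactnessAxiom S) :
    IsProperMap fun ψ : S => (ψ : C(ℝ, X)) 0 := by
  have hzero : IsProperMap fun ψ : S => ((0 : ℝ), ψ) := by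
    refine IsClosedEmbedding.isProperMap ⟨isEmbedding_prodMkRight 0, ?_⟩
    rw [← image_univ, ← singleton_prod]
    exact isClosed_singleton.prod isClosed_univ
  exact isProperMap_of_comp_of_inj (by fun_prop) (by fun_prop)
    (hcpt.isProperMap_evalMap.comp hzero) (Prod.mk_right_injective 0)

lemma isClosed (hcpt : CompactnessAxiom S) : IsClosed S := by
  have hval : IsProperMap ((↑) : S → C(ℝ, X)) :=
    isProperMap_of_comp_of_t2 continuous_subtype_val (continuous_eval_const 0)
      hcpt.isProperMap_eval_zero
  simpa only [Subtype.range_coe] using hval.isClosed_range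

lemma isClosed_image_eval_zero (hcpt : CompactnessAxiom S) {W : Set C(ℝ, X)} (hWS : W ⊆ S)
    (hW : IsClosed W) : IsClosed ((fun φ : C(ℝ, X) => φ 0) '' W) := by
  have h := hcpt.isProperMap_eval_zero.isClosedMap _ (hW.preimage continuous_subtype_val)
  rwa [show (fun ψ : S => (ψ : C(ℝ, X)) 0) = (fun φ : C(ℝ, X) => φ 0) ∘ (↑) from rfl,
    image_comp, Subtype.image_preimage_coe, inter_eq_right.mpr hWS] at h

end CompactnessAxiom

lemma omegaLimit_shiftFlow_subset {S B : Set C(ℝ, X)} (hS : ShiftInvariant S)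
    (hcpt : CompactnessAxiom S) (hB : B ⊆ S) (f : Filter ℝ) :
    omegaLimit f shiftFlow B ⊆ S := by
  refine (omegaLimit_subset_closure_image2 f _ B univ_mem).trans ?_
  refine (closure_mono ?_).trans hcpt.isClosed.closure_subset
  rintro _ ⟨t, -, φ, hφ, rfl⟩
  exact hS t φ (hB hφ)

lemma isClosed_weaklyInvariant_image_omegaLimit {S B : Set C(ℝ, X)} (hS : ShiftInvariant S)
    (hcpt : CompactnessAxiom S) (hB : B ⊆ S) {f : Filter ℝ} (hf : ∀ t, Tendsto (t + ·) f f) :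
    IsClosed ((fun φ : C(ℝ, X) => φ 0) '' omegaLimit f shiftFlow B) ∧
      WeaklyInvariant S ((fun φ : C(ℝ, X) => φ 0) '' omegaLimit f shiftFlow B) :=
  have hsub := omegaLimit_shiftFlow_subset hS hcpt hB f
  ⟨hcpt.isClosed_image_eval_zero hsub (isClosed_omegaLimit _ _ _),
    weaklyInvariant_image_eval_zero hsub (shiftFlow.isInvariant_omegaLimit f B hf)⟩

theorem limitSets_closed_weaklyInvariant (S : Set C(ℝ, X)) (hS : ShiftInvariant S)
    (hcpt : CompactnessAxiom S) (x : X) :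
    IsClosed (omegaS S x) ∧ WeaklyInvariant S (omegaS S x) ∧
    IsClosed (alphaS S x) ∧ WeaklyInvariant S (alphaS S x) := by
  have hSx : {φ ∈ S | φ 0 = x} ⊆ S := sep_subset S _
  rw [omegaS, alphaS, omegaSet_eq_omegaLimit, alphaSet_eq_omegaLimit, ← and_assoc]
  exact ⟨isClosed_weaklyInvariant_image_omegaLimit hS hcpt hSx
      fun t => tendsto_atTop_add_const_left atTop t tendsto_id,
    isClosed_weaklyInvariant_image_omegaLimit hS hcpt hSx
      fun t => tendsto_atBot_add_const_left atBot t tendsto_id⟩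

end AxODE
end

section
/- Let X be a compact metric space, S ⊆ C(ℝ,X) a shift-invariant Borel set, and μ an invariant measure of S. For t ∈ ℝ and A ⊆ X define V(t)⁻¹A := {x ∈ X : there exists φ ∈ S with φ(0) = x and φ(t) ∈ A}. Then for every Borel set B ⊆ X, setting B_∞ := ⋂_{N=0}^∞ ⋃_{n=N}^∞ V(n)⁻¹B (n ranging over natural numbers), the outer measure of B \ B_∞ induced by μ is zero; equivalently, μ-almost every point of B lies in B_∞. -/
/-!
The time-one shift preserves `ν`, so Poincaré recurrence for it shows that `ν`-almost every
trajectory lies in `S` and, if it starts in `B`, visits `B` at infinitely many integer times.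
Such a trajectory witnesses that its initial point lies in `B_∞`. The set of these initial points
is the image under `π` of a set of full `ν`-measure; it need not be Borel, but since `ν` is tight
on the Polish space `C(ℝ, X)`, it contains continuous images of compact sets, which are Borel,
of `π_*ν`-measure arbitrarily close to full.
-/

open Set Filter Topology MeasureTheory

namespace AxODE

variable {X : Type*} [MetricSpace X]

/-- `V(t)⁻¹A = {x ∈ X : ∃ φ ∈ S, φ(0) = x, φ(t) ∈ A}`. -/
def Vinv (S : Set C(ℝ, X)) (t : ℝ) (A : Set X) : Set X :=
  {x | ∃ φ ∈ S, φ 0 = x ∧ φ t ∈ A}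

theorem _root_.MeasureTheory.ae_map_exists_of_ae {α β : Type*} [TopologicalSpace α] [T2Space α]
    [MeasurableSpace α] [OpensMeasurableSpace α] [TopologicalSpace β] [T2Space β]
    [MeasurableSpace β] [BorelSpace β] {ν : Measure α} [IsFiniteMeasure ν]
    [ν.InnerRegularCompactLTTop] {f : α → β} (hf : Continuous f) {p : α → Prop}
    (h : ∀ᵐ a ∂ν, p a) :
    ∀ᵐ b ∂ν.map f, ∃ a, p a ∧ f a = b := by
  obtain ⟨G, hG_ae, hG, hGp⟩ := h.exists_measurable_mem
  rw [ae_iff]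
  refine nonpos_iff_eq_zero.1 (ENNReal.le_of_forall_pos_le_add fun ε hε _ => ?_)
  obtain ⟨K, hKG, hK, hGK⟩ :=
    hG.exists_isCompact_sdiff_lt (measure_ne_top ν G) (ENNReal.coe_ne_zero.2 hε.ne')
  have hfK : MeasurableSet (f '' K) := (hK.image hf).isClosed.measurableSet
  calc ν.map f {b | ¬∃ a, p a ∧ f a = b}
      ≤ ν.map f (f '' K)ᶜ := measure_mono fun b hb ⟨a, haK, hab⟩ => hb ⟨a, hGp a (hKG haK), hab⟩
    _ = ν (f ⁻¹' (f '' K)ᶜ) := Measure.map_apply hf.measurable hfK.compl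
    _ ≤ ν (Gᶜ ∪ G \ K) := measure_mono fun a ha =>
      (em (a ∈ G)).symm.imp_right fun haG => ⟨haG, fun haK => ha (mem_image_of_mem f haK)⟩
    _ ≤ ν Gᶜ + ν (G \ K) := measure_union_le _ _
    _ ≤ 0 + ε := by rw [mem_ae_iff.1 hG_ae, zero_add, zero_add]; exact hGK.le

theorem continuous_shift (t : ℝ) : Continuous (shift t : C(ℝ, X) → C(ℝ, X)) :=
  ContinuousMap.continuous_precomp ⟨fun s => s + t, continuous_add_const t⟩

theorem iterate_shift_one (n : ℕ) (φ : C(ℝ, X)) : (shift 1)^[n] φ = shift n φ := by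
  induction n with
  | zero => ext s; simp [shift]
  | succ n ih =>
    rw [Function.iterate_succ_apply', ih]
    ext s
    simp only [shift, ContinuousMap.coe_mk, Nat.cast_succ]
    ring_nf

theorem ae_frequently_apply_nat_mem [MeasurableSpace X] [BorelSpace X]
    [MeasurableSpace C(ℝ, X)] [OpensMeasurableSpace C(ℝ, X)] {ν : Measure C(ℝ, X)}
    [IsFiniteMeasure ν] (hν : MeasurePreserving (shift 1) ν ν) {B : Set X}
    (hB : MeasurableSet B) :
    ∀ᵐ φ ∂ν, φ 0 ∈ B → ∃ᶠ n : ℕ in atTop, φ n ∈ B := by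
  have hB' : MeasurableSet ((fun φ : C(ℝ, X) => φ 0) ⁻¹' B) :=
    (continuous_eval_const 0).measurable hB
  filter_upwards [hν.conservative.ae_mem_imp_frequently_image_mem hB'.nullMeasurableSet]
    with φ hφ hφ0
  simpa [iterate_shift_one, shift] using hφ hφ0

theorem apply_zero_mem_iInter_iUnion_Vinv {S : Set C(ℝ, X)} {B : Set X} {φ : C(ℝ, X)}
    (hφS : φ ∈ S) (hφ : ∃ᶠ n : ℕ in atTop, φ n ∈ B) :
    φ 0 ∈ ⋂ N : ℕ, ⋃ n : ℕ, ⋃ _ : N ≤ n, Vinv S (n : ℝ) B :=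
  mem_iInter.2 fun N =>
    let ⟨n, hn, hφn⟩ := frequently_atTop.1 hφ N
    mem_iUnion₂.2 ⟨n, hn, φ, hφS, rfl, hφn⟩

theorem poincare_recurrence_general [CompactSpace X]
    [MeasurableSpace X] [BorelSpace X]
    [MeasurableSpace C(ℝ, X)] [BorelSpace C(ℝ, X)]
    (S : Set C(ℝ, X)) (hSmeas : MeasurableSet S)
    (μ : Measure X) (ν : Measure C(ℝ, X)) (hν : IsProbabilityMeasure ν)
    (hνS : ν S = 1) (hνinv : ∀ t : ℝ, Measure.map (shift t) ν = ν)
    (hμ : μ = Measure.map (fun φ : C(ℝ, X) => φ 0) ν)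
    (B : Set X) (hB : MeasurableSet B) :
    μ (B \ ⋂ N : ℕ, ⋃ n : ℕ, ⋃ _ : N ≤ n, Vinv S (n : ℝ) B) = 0 := by
  have hS : ∀ᵐ φ ∂ν, φ ∈ S := (prob_compl_eq_zero_iff hSmeas).2 hνS
  have hrec := ae_frequently_apply_nat_mem ⟨(continuous_shift 1).measurable, hνinv 1⟩ hB
  have hgood := ae_map_exists_of_ae (continuous_eval_const 0) (hS.and hrec)
  rw [← hμ, ae_iff] at hgood
  refine measure_mono_null (fun x hx => ?_) hgood
  rintro ⟨φ, ⟨hφS, hφ⟩, rfl⟩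
  exact hx.2 (apply_zero_mem_iInter_iUnion_Vinv hφS (hφ hx.1))

/-- Poincaré recurrence.  Note: a measure in Mathlib, applied to an
arbitrary (possibly non-measurable) set, gives the induced outer measure of that set. -/
theorem poincare_recurrence [CompactSpace X]
    [MeasurableSpace X] [BorelSpace X]
    [MeasurableSpace C(ℝ, X)] [BorelSpace C(ℝ, X)]
    (S : Set C(ℝ, X)) (hS : ShiftInvariant S) (hSmeas : MeasurableSet S)
    (μ : Measure X) (ν : Measure C(ℝ, X)) (hν : IsProbabilityMeasure ν)
    (hνS : ν S = 1) (hνinv : ∀ t : ℝ, Measure.map (shift t) ν = ν)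
    (hμ : μ = Measure.map (fun φ : C(ℝ, X) => φ 0) ν)
    (B : Set X) (hB : MeasurableSet B) :
    μ (B \ ⋂ N : ℕ, ⋃ n : ℕ, ⋃ _ : N ≤ n, Vinv S (n : ℝ) B) = 0 :=
  poincare_recurrence_general S hSmeas μ ν hν hνS hνinv hμ B hB

end AxODE
end
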